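/- arXiv:2103.08101 — 5 statements merged into one kernel-verified Lean document; each statement's English description precedes it below -/
import Mathlib

section
/- Let T be a tetrahedron in R^3 with edge lengths h_1 ≤ h_2 ≤ ... ≤ h_6 = h_T = diam(T), and let α_1, α_2, α_3 be the edge lengths determined by the standard vertex assignment (α_2 the shortest edge, α_1 the longest edge connected to it, α_3 the edge from x_1 to x_4). Define R_T = h_1 h_2 h_T^2 / |T| and H_T = α_1 α_2 α_3 h_T / |T|. Then (1/2) H_T ≤ R_T ≤ 2 H_T. -/
noncomputable section

/-- The volume of the tetrahedron with vertices `x1 x2 x3 x4`: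
`|det (x2-x1, x3-x1, x4-x1)| / 6`. -/
noncomputable def tetVolume (x1 x2 x3 x4 : EuclideanSpace ℝ (Fin 3)) : ℝ :=
  |(Matrix.of (fun i j => (![x2 - x1, x3 - x1, x4 - x1] j) i) :
      Matrix (Fin 3) (Fin 3) ℝ).det| / 6

end

private lemma stmt0_prod1 (α1 α3 h2 hT : ℝ) (hx : α1 ≤ 2 * h2) (h3T : α3 ≤ hT)
    (h3nn : 0 ≤ α3) (h2nn : 0 ≤ h2) : α1 * α3 ≤ 2 * (h2 * hT) :=
  calc α1 * α3 ≤ (2 * h2) * hT := mul_le_mul hx h3T h3nn (by linarith)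
    _ = 2 * (h2 * hT) := by ring

private lemma stmt0_prod2 (α1 α3 h2 hT : ℝ) (hx : α3 ≤ 2 * h2) (h1T : α1 ≤ hT)
    (h3nn : 0 ≤ α3) (hTnn : 0 ≤ hT) : α1 * α3 ≤ 2 * (h2 * hT) :=
  calc α1 * α3 ≤ hT * (2 * h2) := mul_le_mul h1T hx h3nn hTnn
    _ = 2 * (h2 * hT) := by ring

private lemma stmt0_core (α1 α2 α3 h1 h2 hT : ℝ) (hα2 : α2 = h1) (h0 : 0 ≤ h1)
    (h12 : h1 ≤ h2) (hA : α1 ≤ hT) (hB : α3 ≤ hT) (hC : hT ≤ 2 * α1)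
    (hD : h2 ≤ α3) (hE : α1 * α3 ≤ 2 * (h2 * hT)) :
    (1 / 2) * (α1 * α2 * α3 * hT) ≤ h1 * h2 * hT ^ 2 ∧
      h1 * h2 * hT ^ 2 ≤ 2 * (α1 * α2 * α3 * hT) := by
  subst hα2
  have h2nn : 0 ≤ h2 := le_trans h0 h12
  have hα3nn : 0 ≤ α3 := le_trans h2nn hD
  have hTnn : 0 ≤ hT := le_trans hα3nn hB
  constructor
  · nlinarith [mul_le_mul_of_nonneg_left hE (mul_nonneg h0 hTnn)]
  · have key : h2 * hT ≤ 2 * (α1 * α3) := by nlinarith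
    nlinarith [mul_le_mul_of_nonneg_left key (mul_nonneg h0 hTnn)]

/-- Equivalence of `R_T = h₁ h₂ h_T² / |T|` and `H_T = α₁ α₂ α₃ h_T / |T|` for a
tetrahedron in the standard vertex assignment: `(1/2) H_T ≤ R_T ≤ 2 H_T`.
Here `α₂` is the length of the shortest edge `e₂` (an edge of the face
`x₁x₂x₃`, with endpoints `x₁,x₃` in Type 1 and `x₂,x₃` in Type 2, according to
whether `x₃` lies in the same half-space as `x₁` w.r.t. the perpendicular
bisector plane of `x₁x₂`, i.e. `dist x₃ x₁ ≤ dist x₃ x₂`), `α₁ = |x₁x₂|` is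
the longest edge connected to `e₂`, `x₄` lies in the same half-space as `x₁`
(`dist x₄ x₁ ≤ dist x₄ x₂`), `α₃ = |x₁x₄|`; `h₁ ≤ h₂` are the two shortest
edge lengths and `h_T` the largest (the diameter). -/
theorem stmt_0 (x1 x2 x3 x4 : EuclideanSpace ℝ (Fin 3))
    (hind : AffineIndependent ℝ ![x1, x2, x3, x4])
    (α1 α2 α3 h1 h2 hT : ℝ)
    (edges : Multiset ℝ)
    (hedges : edges = {dist x1 x2, dist x1 x3, dist x1 x4,
                       dist x2 x3, dist x2 x4, dist x3 x4})
    (hα1 : α1 = dist x1 x2)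
    (hα3 : α3 = dist x1 x4)
    -- `e₂` is the shortest edge of `T`
    (hα2min : ∀ e ∈ edges, α2 ≤ e)
    -- endpoints of `e₂` according to the type of `T`, and `α₁ = |x₁x₂|` is the
    -- longest edge connected to `e₂`
    (htype :
      (dist x3 x1 ≤ dist x3 x2 ∧ α2 = dist x1 x3 ∧
        dist x1 x4 ≤ α1 ∧ dist x2 x3 ≤ α1 ∧ dist x3 x4 ≤ α1) ∨
      (dist x3 x2 ≤ dist x3 x1 ∧ α2 = dist x2 x3 ∧
        dist x2 x4 ≤ α1 ∧ dist x1 x3 ≤ α1 ∧ dist x3 x4 ≤ α1))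
    -- `x₄` lies in the same half-space as `x₁`
    (hx4 : dist x4 x1 ≤ dist x4 x2)
    -- `h₁ ≤ h₂` are the two shortest edge lengths
    (hh1 : h1 ∈ edges) (hh1min : ∀ e ∈ edges, h1 ≤ e)
    (hh2 : h2 ∈ edges.erase h1) (hh2min : ∀ e ∈ edges.erase h1, h2 ≤ e)
    -- `h_T = diam T` is the largest edge length
    (hhT : hT ∈ edges) (hhTmax : ∀ e ∈ edges, e ≤ hT) :
    (1 / 2) * (α1 * α2 * α3 * hT / tetVolume x1 x2 x3 x4) ≤
        h1 * h2 * hT ^ 2 / tetVolume x1 x2 x3 x4 ∧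
      h1 * h2 * hT ^ 2 / tetVolume x1 x2 x3 x4 ≤
        2 * (α1 * α2 * α3 * hT / tetVolume x1 x2 x3 x4) := by
  have hVnn : 0 ≤ tetVolume x1 x2 x3 x4 := div_nonneg (abs_nonneg _) (by norm_num)
  suffices h : (1 / 2) * (α1 * α2 * α3 * hT) ≤ h1 * h2 * hT ^ 2 ∧
      h1 * h2 * hT ^ 2 ≤ 2 * (α1 * α2 * α3 * hT) by
    rcases eq_or_lt_of_le hVnn with hz | hp
    · rw [← hz]; simp
    · constructor
      · rw [← mul_div_assoc, div_le_div_iff₀ hp hp]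
        nlinarith [h.1]
      · rw [← mul_div_assoc, div_le_div_iff₀ hp hp]
        nlinarith [h.2]
  -- membership helpers
  have mem12 : dist x1 x2 ∈ edges := by rw [hedges]; simp
  have mem13 : dist x1 x3 ∈ edges := by rw [hedges]; simp
  have mem14 : dist x1 x4 ∈ edges := by rw [hedges]; simp
  have mem23 : dist x2 x3 ∈ edges := by rw [hedges]; simp
  have mem24 : dist x2 x4 ∈ edges := by rw [hedges]; simp
  have mem34 : dist x3 x4 ∈ edges := by rw [hedges]; simp
  have hα1T : α1 ≤ hT := hα1 ▸ hhTmax _ mem12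
  have hα3T : α3 ≤ hT := hα3 ▸ hhTmax _ mem14
  have hα1nn : 0 ≤ α1 := hα1 ▸ dist_nonneg
  have hα2mem : α2 ∈ edges := by
    rcases htype with ⟨_, h2, _⟩ | ⟨_, h2, _⟩ <;> rw [h2]
    exacts [mem13, mem23]
  have hα2h1 : α2 = h1 := le_antisymm (hα2min h1 hh1) (hh1min α2 hα2mem)
  have h1nn : 0 ≤ h1 := by
    rw [← hα2h1]
    rcases htype with ⟨_, h2, _⟩ | ⟨_, h2, _⟩ <;> rw [h2] <;> exact dist_nonneg
  have h12 : h1 ≤ h2 := hh1min h2 (Multiset.mem_of_mem_erase hh2)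
  -- case split on the type
  rcases htype with ⟨ht1, ht2, ht3, ht4, ht5⟩ | ⟨ht1, ht2, ht3, ht4, ht5⟩
  · -- Type 1 : α₂ = |x₁x₃|
    have h13 : dist x1 x3 = h1 := ht2 ▸ hα2h1
    have herase : edges.erase h1 =
        {dist x1 x2, dist x1 x4, dist x2 x3, dist x2 x4, dist x3 x4} := by
      rw [hedges, ← h13]
      simp only [Multiset.insert_eq_cons]
      rw [Multiset.cons_swap (dist x1 x2) (dist x1 x3)]
      exact Multiset.erase_cons_head _ _
    rw [herase] at hh2 hh2min
    have hD : h2 ≤ α3 := hα3 ▸ hh2min _ (by simp)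
    have hα2α1 : α2 ≤ α1 := hα2min α1 (hα1 ▸ mem12)
    -- hT ≤ 2 α1
    have hC : hT ≤ 2 * α1 := by
      rw [hedges] at hhT
      have t24 : dist x2 x4 ≤ dist x2 x1 + dist x1 x4 := dist_triangle _ _ _
      rw [dist_comm x2 x1, ← hα1] at t24
      simp only [Multiset.insert_eq_cons, Multiset.mem_cons, Multiset.mem_singleton] at hhT
      rcases hhT with h | h | h | h | h | h <;> rw [h] <;>
        first
          | linarith [hα1.symm.le]
          | linarith [ht2 ▸ hα2α1]
          | linarith
    -- α1 * α3 ≤ 2 * (h2 * hT)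
    have hE : α1 * α3 ≤ 2 * (h2 * hT) := by
      have hTnn : 0 ≤ hT := le_trans hα1nn hα1T
      have hα3nn : 0 ≤ α3 := hα3 ▸ dist_nonneg
      have h2nn : 0 ≤ h2 := le_trans h1nn h12
      simp only [Multiset.insert_eq_cons, Multiset.mem_cons, Multiset.mem_singleton] at hh2
      rcases hh2 with h | h | h | h | h
      · -- h2 = |x₁x₂| = α1
        have hx : α1 = h2 := by rw [hα1, ← h]
        exact stmt0_prod1 α1 α3 h2 hT (by linarith) hα3T hα3nn h2nn
      · -- h2 = |x₁x₄| = α3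
        have hx : α3 = h2 := by rw [hα3, ← h]
        exact stmt0_prod2 α1 α3 h2 hT (by linarith) hα1T hα3nn hTnn
      · -- h2 = |x₂x₃| ; α1 ≤ h1 + h2 ≤ 2 h2
        have t : dist x1 x2 ≤ dist x1 x3 + dist x3 x2 := dist_triangle _ _ _
        rw [dist_comm x3 x2, ← h, h13, ← hα1] at t
        exact stmt0_prod1 α1 α3 h2 hT (by linarith) hα3T hα3nn h2nn
      · -- h2 = |x₂x₄| ; α3 ≤ h2
        have t : α3 ≤ h2 := by rw [hα3, dist_comm x1 x4, h, dist_comm x2 x4]; exact hx4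
        exact stmt0_prod2 α1 α3 h2 hT (by linarith) hα1T hα3nn hTnn
      · -- h2 = |x₃x₄| ; α3 ≤ h1 + h2
        have t : dist x1 x4 ≤ dist x1 x3 + dist x3 x4 := dist_triangle _ _ _
        rw [← h, h13, ← hα3] at t
        exact stmt0_prod2 α1 α3 h2 hT (by linarith) hα1T hα3nn hTnn
    exact stmt0_core α1 α2 α3 h1 h2 hT hα2h1 h1nn h12 hα1T hα3T hC hD hE
  · -- Type 2 : α₂ = |x₂x₃|
    have h23 : dist x2 x3 = h1 := ht2 ▸ hα2h1
    have herase : edges.erase h1 =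
        {dist x1 x2, dist x1 x3, dist x1 x4, dist x2 x4, dist x3 x4} := by
      rw [hedges, ← h23]
      simp only [Multiset.insert_eq_cons]
      rw [Multiset.cons_swap (dist x1 x4) (dist x2 x3),
        Multiset.cons_swap (dist x1 x3) (dist x2 x3),
        Multiset.cons_swap (dist x1 x2) (dist x2 x3)]
      exact Multiset.erase_cons_head _ _
    rw [herase] at hh2 hh2min
    have hD : h2 ≤ α3 := hα3 ▸ hh2min _ (by simp)
    have hα2α1 : α2 ≤ α1 := hα2min α1 (hα1 ▸ mem12)
    have h14le24 : dist x1 x4 ≤ dist x2 x4 := by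
      rw [dist_comm x1 x4, dist_comm x2 x4]; exact hx4
    -- hT ≤ 2 α1 (in fact hT ≤ α1 here, but that is fine)
    have hC : hT ≤ 2 * α1 := by
      rw [hedges] at hhT
      simp only [Multiset.insert_eq_cons, Multiset.mem_cons, Multiset.mem_singleton] at hhT
      rcases hhT with h | h | h | h | h | h <;> rw [h] <;>
        first
          | linarith [hα1.symm.le]
          | linarith [ht2 ▸ hα2α1]
          | linarith
    have hE : α1 * α3 ≤ 2 * (h2 * hT) := by
      have hTnn : 0 ≤ hT := le_trans hα1nn hα1T
      have hα3nn : 0 ≤ α3 := hα3 ▸ dist_nonneg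
      have h2nn : 0 ≤ h2 := le_trans h1nn h12
      simp only [Multiset.insert_eq_cons, Multiset.mem_cons, Multiset.mem_singleton] at hh2
      rcases hh2 with h | h | h | h | h
      · -- h2 = |x₁x₂| = α1
        have hx : α1 = h2 := by rw [hα1, ← h]
        exact stmt0_prod1 α1 α3 h2 hT (by linarith) hα3T hα3nn h2nn
      · -- h2 = |x₁x₃| ; α1 ≤ h2 + h1
        have t : dist x1 x2 ≤ dist x1 x3 + dist x3 x2 := dist_triangle _ _ _
        rw [dist_comm x3 x2, h23, ← h, ← hα1] at t
        exact stmt0_prod1 α1 α3 h2 hT (by linarith) hα3T hα3nn h2nn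
      · -- h2 = |x₁x₄| = α3
        have hx : α3 = h2 := by rw [hα3, ← h]
        exact stmt0_prod2 α1 α3 h2 hT (by linarith) hα1T hα3nn hTnn
      · -- h2 = |x₂x₄| ; α3 ≤ h2
        have t : α3 ≤ h2 := by rw [hα3, h]; exact h14le24
        exact stmt0_prod2 α1 α3 h2 hT (by linarith) hα1T hα3nn hTnn
      · -- h2 = |x₃x₄| ; α3 ≤ |x₂x₄| ≤ h1 + h2
        have t : dist x2 x4 ≤ dist x2 x3 + dist x3 x4 := dist_triangle _ _ _
        rw [← h, h23] at t
        have t' : α3 ≤ h1 + h2 := le_trans (hα3 ▸ h14le24) t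
        exact stmt0_prod2 α1 α3 h2 hT (by linarith) hα1T hα3nn hTnn
    exact stmt0_core α1 α2 α3 h1 h2 hT hα2h1 h1nn h12 hα1T hα3T hC hD hE
end

section
/- Let the 3×3 matrix X have rows (1,0,s21), (0,1,s22), (0,0,t2) with s21^2 + s22^2 + t2^2 = 1 and t2 > 0. Set s = sqrt(s21^2 + s22^2). Then the operator (spectral) norm of X equals sqrt(1+s) and the operator norm of X^{-1} equals 1/sqrt(1-s). -/
open Matrix

set_option maxHeartbeats 1000000 in
/-- Operator norm of the matrix `X` with rows `(1,0,s21), (0,1,s22), (0,0,t2)`,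
where `(s21, s22, t2)` is a unit vector with `t2 > 0`.  With
`s = sqrt (s21² + s22²)`, `‖X‖ = sqrt (1 + s)` and `‖X⁻¹‖ = 1 / sqrt (1 - s)`. -/
theorem stmt_2 (s21 s22 t2 : ℝ)
    (hunit : s21 ^ 2 + s22 ^ 2 + t2 ^ 2 = 1) (ht2 : 0 < t2)
    (X : Matrix (Fin 3) (Fin 3) ℝ)
    (hX : X = !![1, 0, s21; 0, 1, s22; 0, 0, t2])
    (s : ℝ) (hs : s = Real.sqrt (s21 ^ 2 + s22 ^ 2)) :
    ‖Matrix.toEuclideanCLM (𝕜 := ℝ) X‖ = Real.sqrt (1 + s) ∧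
      ‖Matrix.toEuclideanCLM (𝕜 := ℝ) X⁻¹‖ = 1 / Real.sqrt (1 - s) := by
  subst hX
  have hs0 : 0 ≤ s := hs ▸ Real.sqrt_nonneg _
  have hs2 : s ^ 2 = s21 ^ 2 + s22 ^ 2 := by rw [hs]; exact Real.sq_sqrt (by positivity)
  have ht : t2 ^ 2 = 1 - s ^ 2 := by rw [hs2]; linarith
  have hs1 : s < 1 := by nlinarith
  have h1s : (0:ℝ) < 1 - s := by linarith
  have h1s' : (0:ℝ) < 1 + s := by linarith
  have ht2' : t2 ≠ 0 := ne_of_gt ht2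
  set X : Matrix (Fin 3) (Fin 3) ℝ := !![1, 0, s21; 0, 1, s22; 0, 0, t2] with hX
  -- component formula
  have happ : ∀ (A : Matrix (Fin 3) (Fin 3) ℝ) (x : EuclideanSpace ℝ (Fin 3)) (i : Fin 3),
      (Matrix.toEuclideanCLM (𝕜 := ℝ) A x) i = ∑ j, A i j * x j := by
    intro A x i
    have h := congrFun (Matrix.ofLp_toEuclideanCLM (𝕜 := ℝ) A x) i
    simpa [Matrix.toLin'_apply, Matrix.mulVec, dotProduct] using h
  have hnsq : ∀ x : EuclideanSpace ℝ (Fin 3), ‖x‖ ^ 2 = (x 0)^2 + (x 1)^2 + (x 2)^2 := by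
    intro x
    rw [EuclideanSpace.norm_eq, Real.sq_sqrt (by positivity)]
    simp [Fin.sum_univ_three, sq_abs]
  have hAnorm : ∀ (A : Matrix (Fin 3) (Fin 3) ℝ) (x : EuclideanSpace ℝ (Fin 3)),
      ‖Matrix.toEuclideanCLM (𝕜 := ℝ) A x‖ ^ 2
        = (∑ j, A 0 j * x j)^2 + (∑ j, A 1 j * x j)^2 + (∑ j, A 2 j * x j)^2 := by
    intro A x
    rw [hnsq, happ, happ, happ]
  have sqeq : ∀ a b : ℝ, 0 ≤ a → 0 ≤ b → a^2 = b^2 → a = b := by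
    intro a b ha hb h; nlinarith
  -- key algebraic identities
  have hid1 : ∀ a b c : ℝ, s * ((1+s)*(a^2+b^2+c^2) - ((a + s21*c)^2 + (b + s22*c)^2 + (t2*c)^2))
      = (s21*a + s22*b - s*c)^2 + (s21*b - s22*a)^2 := by
    intro a b c
    linear_combination (a^2+b^2)*hs2 + (-(s*c^2))*hunit
  have hid2 : ∀ a b c : ℝ, s * ((a + s21*c)^2 + (b + s22*c)^2 + (t2*c)^2 - (1-s)*(a^2+b^2+c^2))
      = (s21*a + s22*b + s*c)^2 + (s21*b - s22*a)^2 := by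
    intro a b c
    linear_combination (a^2+b^2)*hs2 + (s*c^2)*hunit
  -- upper bound tool
  have upper : ∀ (A : Matrix (Fin 3) (Fin 3) ℝ) (c : ℝ), 0 ≤ c →
      (∀ x : EuclideanSpace ℝ (Fin 3), ‖Matrix.toEuclideanCLM (𝕜 := ℝ) A x‖^2 ≤ c^2 * ‖x‖^2) →
      ‖Matrix.toEuclideanCLM (𝕜 := ℝ) A‖ ≤ c := by
    intro A c hc h
    refine ContinuousLinearMap.opNorm_le_bound _ hc (fun x => ?_)
    calc ‖Matrix.toEuclideanCLM (𝕜 := ℝ) A x‖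
        = Real.sqrt (‖Matrix.toEuclideanCLM (𝕜 := ℝ) A x‖^2) := (Real.sqrt_sq (norm_nonneg _)).symm
      _ ≤ Real.sqrt (c^2*‖x‖^2) := Real.sqrt_le_sqrt (h x)
      _ = c*‖x‖ := by
          rw [show c^2*‖x‖^2 = (c*‖x‖)^2 by ring, Real.sqrt_sq (mul_nonneg hc (norm_nonneg _))]
  have lower : ∀ (A : Matrix (Fin 3) (Fin 3) ℝ) (c : ℝ) (x : EuclideanSpace ℝ (Fin 3)), 0 < ‖x‖ →
      ‖Matrix.toEuclideanCLM (𝕜 := ℝ) A x‖ = c * ‖x‖ →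
      c ≤ ‖Matrix.toEuclideanCLM (𝕜 := ℝ) A‖ := by
    intro A c x hx hAx
    have h := (Matrix.toEuclideanCLM (𝕜 := ℝ) A).le_opNorm x
    rw [hAx] at h
    exact le_of_mul_le_mul_right h hx
  -- inverse formula
  have hXY : X * !![1, 0, -(s21/t2); 0, 1, -(s22/t2); 0, 0, t2⁻¹] = 1 := by
    rw [hX, Matrix.mul_fin_three, Matrix.one_fin_three]
    ext i j
    fin_cases i <;> fin_cases j <;> field_simp <;> simp [ht2']
  have hXinv : X⁻¹ = !![1, 0, -(s21/t2); 0, 1, -(s22/t2); 0, 0, t2⁻¹] :=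
    Matrix.inv_eq_right_inv hXY
  rcases eq_or_lt_of_le hs0 with hseq | hspos
  · -- s = 0 : X is the identity
    have h21 : s21 = 0 := by nlinarith
    have h22 : s22 = 0 := by nlinarith
    have ht1 : t2 = 1 := by nlinarith
    have hX1 : X = 1 := by rw [hX, h21, h22, ht1, Matrix.one_fin_three]
    rw [hX1, inv_one, _root_.map_one, ← hseq]
    norm_num [ContinuousLinearMap.one_def, ContinuousLinearMap.norm_id]
  · constructor
    · apply le_antisymm
      · apply upper _ _ (Real.sqrt_nonneg _)
        intro x
        rw [hAnorm, hnsq, Real.sq_sqrt h1s'.le]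
        simp [hX, Fin.sum_univ_three]
        nlinarith [hid1 (x 0) (x 1) (x 2), hspos, sq_nonneg (s21*x 0 + s22*x 1 - s*x 2),
          sq_nonneg (s21*x 1 - s22*x 0)]
      · set v : EuclideanSpace ℝ (Fin 3) := (WithLp.equiv 2 (Fin 3 → ℝ)).symm ![s21, s22, s] with hv
        have hvc : ∀ i, v i = ![s21, s22, s] i := fun i => rfl
        have hvn : ‖v‖^2 = 2*s^2 := by
          rw [hnsq, hvc, hvc, hvc]
          simp only [Matrix.cons_val_zero, Matrix.cons_val_one, Matrix.head_cons,
            Matrix.cons_val_two, Matrix.tail_cons]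
          linear_combination -hs2
        have hvpos : 0 < ‖v‖ := by
          rcases (norm_nonneg v).lt_or_eq with h | h
          · exact h
          · exfalso; rw [← h] at hvn; nlinarith [mul_pos hspos hspos]
        apply lower X _ v hvpos
        apply sqeq _ _ (norm_nonneg _) (by positivity)
        rw [hAnorm, mul_pow, Real.sq_sqrt h1s'.le, hvn]
        simp [hX, hvc, Fin.sum_univ_three]
        linear_combination (-(1+s)^2) * hs2 + s^2 * ht
    · rw [hXinv]
      set Y : Matrix (Fin 3) (Fin 3) ℝ := !![1, 0, -(s21/t2); 0, 1, -(s22/t2); 0, 0, t2⁻¹] with hY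
      apply le_antisymm
      · apply upper _ _ (by positivity)
        intro w
        set u : EuclideanSpace ℝ (Fin 3) := Matrix.toEuclideanCLM (𝕜 := ℝ) Y w with hu
        have hwu : Matrix.toEuclideanCLM (𝕜 := ℝ) X u = w := by
          rw [hu, ← ContinuousLinearMap.mul_apply, ← _root_.map_mul, hXY, _root_.map_one,
            ContinuousLinearMap.one_apply]
        have key : (1-s) * ‖u‖^2 ≤ ‖Matrix.toEuclideanCLM (𝕜 := ℝ) X u‖^2 := by
          rw [hAnorm X u, hnsq u]
          simp only [hX]
          simp [Fin.sum_univ_three]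
          nlinarith [hid2 (u 0) (u 1) (u 2), hspos, sq_nonneg (s21*u 0 + s22*u 1 + s*u 2),
            sq_nonneg (s21*u 1 - s22*u 0)]
        rw [hwu] at key
        rw [div_pow, one_pow, Real.sq_sqrt h1s.le]
        rw [div_mul_eq_mul_div, le_div_iff₀ h1s]
        nlinarith [key]
      · set v : EuclideanSpace ℝ (Fin 3) := (WithLp.equiv 2 (Fin 3 → ℝ)).symm ![s21, s22, -s] with hv
        set w : EuclideanSpace ℝ (Fin 3) := Matrix.toEuclideanCLM (𝕜 := ℝ) X v with hw
        have hYw : Matrix.toEuclideanCLM (𝕜 := ℝ) Y w = v := by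
          rw [hw, ← ContinuousLinearMap.mul_apply, ← _root_.map_mul, mul_eq_one_comm.mp hXY,
            _root_.map_one, ContinuousLinearMap.one_apply]
        have hvc : ∀ i, v i = ![s21, s22, -s] i := fun i => rfl
        have hvn : ‖v‖^2 = 2*s^2 := by
          rw [hnsq, hvc, hvc, hvc]
          simp only [Matrix.cons_val_zero, Matrix.cons_val_one, Matrix.head_cons,
            Matrix.cons_val_two, Matrix.tail_cons]
          linear_combination -hs2
        have hwn : ‖w‖^2 = 2*s^2*(1-s) := by
          rw [hw, hAnorm]
          simp [hX, hvc, Fin.sum_univ_three]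
          linear_combination (-(1-s)^2) * hs2 + s^2 * ht
        have hwpos : 0 < ‖w‖ := by
          rcases (norm_nonneg w).lt_or_eq with h | h
          · exact h
          · exfalso; rw [← h] at hwn; nlinarith [mul_pos (mul_pos hspos hspos) h1s]
        apply lower Y _ w hwpos
        rw [hYw]
        apply sqeq _ _ (norm_nonneg _) (by positivity)
        rw [mul_pow, div_pow, one_pow, Real.sq_sqrt h1s.le, hvn, hwn]
        field_simp
end

section
/- Let A = X·Y where X has rows (1,0,s21),(0,1,s22),(0,0,t2) with s21^2+s22^2+t2^2=1, t2>0, and Y has rows (1,±s1,0),(0,t1,0),(0,0,1) with s1^2+t1^2=1, t1>0. Set s_1 = |s1| and s_2 = sqrt(s21^2+s22^2). Then ‖A‖ ≤ sqrt((1+s_1)(1+s_2)) and ‖A^{-1}‖ ≤ 1/sqrt((1−s_1)(1−s_2)) = sqrt((1+s_1)(1+s_2))/(t_1 t_2). -/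
open Matrix

private lemma norm_toEuclideanCLM_apply' (A : Matrix (Fin 3) (Fin 3) ℝ)
    (x : EuclideanSpace ℝ (Fin 3)) :
    ‖toEuclideanCLM (𝕜 := ℝ) A x‖ =
      Real.sqrt (∑ i, (A.mulVec (fun j => x j) i) ^ 2) := by
  rw [EuclideanSpace.norm_eq]
  congr 1
  refine Finset.sum_congr rfl fun i _ => ?_
  rw [Real.norm_eq_abs, sq_abs]
  rfl

private lemma norm_euclidean' (x : EuclideanSpace ℝ (Fin 3)) :
    ‖x‖ = Real.sqrt (∑ i, (x i) ^ 2) := by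
  rw [EuclideanSpace.norm_eq]
  congr 1
  exact Finset.sum_congr rfl fun i _ => by rw [Real.norm_eq_abs, sq_abs]

private lemma opNorm_le_of_sq' (A : Matrix (Fin 3) (Fin 3) ℝ) (c : ℝ) (hc : 0 ≤ c)
    (h : ∀ v : Fin 3 → ℝ, ∑ i, (A.mulVec v i) ^ 2 ≤ c * ∑ i, (v i) ^ 2) :
    ‖toEuclideanCLM (𝕜 := ℝ) A‖ ≤ Real.sqrt c := by
  refine ContinuousLinearMap.opNorm_le_bound _ (Real.sqrt_nonneg c) fun x => ?_
  rw [norm_toEuclideanCLM_apply', norm_euclidean', ← Real.sqrt_mul hc]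
  exact Real.sqrt_le_sqrt (h fun j => x j)

private lemma opNorm_inv_le_of_sq' (A : Matrix (Fin 3) (Fin 3) ℝ) (hdet : IsUnit A.det)
    (c : ℝ) (hc : 0 < c)
    (h : ∀ v : Fin 3 → ℝ, c * ∑ i, (v i) ^ 2 ≤ ∑ i, (A.mulVec v i) ^ 2) :
    ‖toEuclideanCLM (𝕜 := ℝ) A⁻¹‖ ≤ 1 / Real.sqrt c := by
  refine ContinuousLinearMap.opNorm_le_bound _ (by positivity) fun x => ?_
  rw [norm_toEuclideanCLM_apply', norm_euclidean']
  set v : Fin 3 → ℝ := A⁻¹.mulVec (fun j => x j) with hv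
  have hxv : A.mulVec v = fun j => x j := by
    rw [hv, mulVec_mulVec, Matrix.mul_nonsing_inv A hdet, one_mulVec]
  have h2 := h v
  rw [hxv] at h2
  have hle : ∑ i, (v i) ^ 2 ≤ (1 / c) * ∑ i, (x i) ^ 2 := by
    rw [div_mul_eq_mul_div, le_div_iff₀ hc]
    linarith
  calc Real.sqrt (∑ i, (v i) ^ 2) ≤ Real.sqrt ((1/c) * ∑ i, (x i) ^ 2) :=
        Real.sqrt_le_sqrt hle
    _ = 1 / Real.sqrt c * Real.sqrt (∑ i, (x i) ^ 2) := by
        rw [one_div, one_div, Real.sqrt_mul (inv_nonneg.mpr hc.le), Real.sqrt_inv]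

private lemma cross_bound (s21 s22 σ₂ v0 v1 v2 : ℝ) (hs : 0 ≤ σ₂)
    (hsq : σ₂ ^ 2 = s21 ^ 2 + s22 ^ 2) :
    |2 * v2 * (s21 * v0 + s22 * v1)| ≤ σ₂ * (v0 ^ 2 + v1 ^ 2 + v2 ^ 2) := by
  set r := Real.sqrt (v0 ^ 2 + v1 ^ 2) with hr
  have hr0 : 0 ≤ r := Real.sqrt_nonneg _
  have hr2 : r ^ 2 = v0 ^ 2 + v1 ^ 2 := Real.sq_sqrt (by positivity)
  have hrs : (σ₂ * r) ^ 2 = (s21 ^ 2 + s22 ^ 2) * (v0 ^ 2 + v1 ^ 2) := by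
    rw [mul_pow, hsq, hr2]
  have hq2 : (s21 * v0 + s22 * v1) ^ 2 ≤ (σ₂ * r) ^ 2 := by
    nlinarith [sq_nonneg (s21 * v1 - s22 * v0)]
  have hqa : |s21 * v0 + s22 * v1| ≤ σ₂ * r := by
    have := Real.sqrt_le_sqrt hq2
    rwa [Real.sqrt_sq_eq_abs, Real.sqrt_sq (by positivity)] at this
  have habs : |2 * v2 * (s21 * v0 + s22 * v1)| = 2 * |v2| * |s21 * v0 + s22 * v1| := by
    rw [abs_mul, abs_mul]; norm_num
  rw [habs]
  nlinarith [sq_nonneg (|v2| - r), abs_nonneg v2, abs_nonneg (s21 * v0 + s22 * v1),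
    sq_abs v2,
    mul_le_mul_of_nonneg_left hqa (by positivity : (0:ℝ) ≤ 2 * |v2|)]

private lemma cross_bound1 (s1 v0 v1 : ℝ) :
    |2 * s1 * v0 * v1| ≤ |s1| * (v0 ^ 2 + v1 ^ 2) := by
  have h : |2 * s1 * v0 * v1| = |s1| * (2 * |v0| * |v1|) := by
    rw [abs_mul, abs_mul, abs_mul]; norm_num; ring
  rw [h]
  have := sq_nonneg (|v0| - |v1|)
  nlinarith [sq_abs v0, sq_abs v1, abs_nonneg s1, abs_nonneg v0, abs_nonneg v1]

set_option maxHeartbeats 1000000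

/-- Bounds for the operator norms of `A = X * Y` and `A⁻¹`, where
`X` has rows `(1,0,s21),(0,1,s22),(0,0,t2)` with `(s21,s22,t2)` a unit vector,
`t2 > 0`, and `Y` has rows `(1,±s1,0),(0,t1,0),(0,0,1)` with `s1² + t1² = 1`,
`t1 > 0`.  With `𝐬₁ = |s1|` and `𝐬₂ = sqrt (s21² + s22²)`:
`‖A‖ ≤ sqrt ((1+𝐬₁)(1+𝐬₂))` and
`‖A⁻¹‖ ≤ 1 / sqrt ((1-𝐬₁)(1-𝐬₂)) = sqrt ((1+𝐬₁)(1+𝐬₂)) / (t1 t2)`. -/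
theorem stmt_3 (s1 t1 s21 s22 t2 : ℝ)
    (h1 : s1 ^ 2 + t1 ^ 2 = 1) (ht1 : 0 < t1)
    (h2 : s21 ^ 2 + s22 ^ 2 + t2 ^ 2 = 1) (ht2 : 0 < t2)
    (X Y A : Matrix (Fin 3) (Fin 3) ℝ)
    (hX : X = !![1, 0, s21; 0, 1, s22; 0, 0, t2])
    (hY : Y = !![1, s1, 0; 0, t1, 0; 0, 0, 1] ∨
          Y = !![1, -s1, 0; 0, t1, 0; 0, 0, 1])
    (hA : A = X * Y)
    (σ₁ σ₂ : ℝ) (hσ₁ : σ₁ = |s1|) (hσ₂ : σ₂ = Real.sqrt (s21 ^ 2 + s22 ^ 2)) :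
    ‖Matrix.toEuclideanCLM (𝕜 := ℝ) A‖ ≤ Real.sqrt ((1 + σ₁) * (1 + σ₂)) ∧
    ‖Matrix.toEuclideanCLM (𝕜 := ℝ) A⁻¹‖ ≤ 1 / Real.sqrt ((1 - σ₁) * (1 - σ₂)) ∧
    1 / Real.sqrt ((1 - σ₁) * (1 - σ₂)) =
      Real.sqrt ((1 + σ₁) * (1 + σ₂)) / (t1 * t2) := by
  have hσ₁0 : 0 ≤ σ₁ := hσ₁ ▸ abs_nonneg s1
  have hσ₁sq : σ₁ ^ 2 = s1 ^ 2 := by rw [hσ₁, sq_abs]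
  have hσ₂0 : 0 ≤ σ₂ := hσ₂ ▸ Real.sqrt_nonneg _
  have hσ₂sq : σ₂ ^ 2 = s21 ^ 2 + s22 ^ 2 := by
    rw [hσ₂]; exact Real.sq_sqrt (by positivity)
  have hσ₁lt : σ₁ < 1 := by nlinarith
  have hσ₂lt : σ₂ < 1 := by nlinarith
  -- bounds for X
  have hXup : ∀ v : Fin 3 → ℝ,
      ∑ i, (X.mulVec v i) ^ 2 ≤ (1 + σ₂) * ∑ i, (v i) ^ 2 := by
    intro v
    have hc := abs_le.mp (cross_bound s21 s22 σ₂ (v 0) (v 1) (v 2) hσ₂0 hσ₂sq)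
    have he : ∑ i, (X.mulVec v i) ^ 2
        = (v 0 + s21 * v 2) ^ 2 + (v 1 + s22 * v 2) ^ 2 + (t2 * v 2) ^ 2 := by
      simp [hX, Matrix.mulVec, dotProduct, Fin.sum_univ_three, Matrix.vecHead,
        Matrix.vecTail] <;> ring
    rw [he, Fin.sum_univ_three]
    nlinarith [hc.1, hc.2]
  have hXlo : ∀ v : Fin 3 → ℝ,
      (1 - σ₂) * ∑ i, (v i) ^ 2 ≤ ∑ i, (X.mulVec v i) ^ 2 := by
    intro v
    have hc := abs_le.mp (cross_bound s21 s22 σ₂ (v 0) (v 1) (v 2) hσ₂0 hσ₂sq)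
    have he : ∑ i, (X.mulVec v i) ^ 2
        = (v 0 + s21 * v 2) ^ 2 + (v 1 + s22 * v 2) ^ 2 + (t2 * v 2) ^ 2 := by
      simp [hX, Matrix.mulVec, dotProduct, Fin.sum_univ_three, Matrix.vecHead,
        Matrix.vecTail] <;> ring
    rw [he, Fin.sum_univ_three]
    nlinarith [hc.1, hc.2]
  -- bounds for Y
  have hYup : ∀ v : Fin 3 → ℝ,
      ∑ i, (Y.mulVec v i) ^ 2 ≤ (1 + σ₁) * ∑ i, (v i) ^ 2 := by
    intro v
    have hc := abs_le.mp (cross_bound1 s1 (v 0) (v 1))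
    rcases hY with hY | hY
    · have he : ∑ i, (Y.mulVec v i) ^ 2
          = (v 0 + s1 * v 1) ^ 2 + (t1 * v 1) ^ 2 + (v 2) ^ 2 := by
        simp [hY, Matrix.mulVec, dotProduct, Fin.sum_univ_three,
          Matrix.vecHead, Matrix.vecTail] <;> ring
      rw [he, Fin.sum_univ_three]
      nlinarith [hc.1, hc.2, hσ₁, sq_nonneg (v 2)]
    · have he : ∑ i, (Y.mulVec v i) ^ 2
          = (v 0 - s1 * v 1) ^ 2 + (t1 * v 1) ^ 2 + (v 2) ^ 2 := by
        simp [hY, Matrix.mulVec, dotProduct, Fin.sum_univ_three,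
          Matrix.vecHead, Matrix.vecTail] <;> ring
      rw [he, Fin.sum_univ_three]
      nlinarith [hc.1, hc.2, hσ₁, sq_nonneg (v 2)]
  have hYlo : ∀ v : Fin 3 → ℝ,
      (1 - σ₁) * ∑ i, (v i) ^ 2 ≤ ∑ i, (Y.mulVec v i) ^ 2 := by
    intro v
    have hc := abs_le.mp (cross_bound1 s1 (v 0) (v 1))
    rcases hY with hY | hY
    · have he : ∑ i, (Y.mulVec v i) ^ 2
          = (v 0 + s1 * v 1) ^ 2 + (t1 * v 1) ^ 2 + (v 2) ^ 2 := by
        simp [hY, Matrix.mulVec, dotProduct, Fin.sum_univ_three,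
          Matrix.vecHead, Matrix.vecTail] <;> ring
      rw [he, Fin.sum_univ_three]
      nlinarith [hc.1, hc.2, hσ₁, sq_nonneg (v 2)]
    · have he : ∑ i, (Y.mulVec v i) ^ 2
          = (v 0 - s1 * v 1) ^ 2 + (t1 * v 1) ^ 2 + (v 2) ^ 2 := by
        simp [hY, Matrix.mulVec, dotProduct, Fin.sum_univ_three,
          Matrix.vecHead, Matrix.vecTail] <;> ring
      rw [he, Fin.sum_univ_three]
      nlinarith [hc.1, hc.2, hσ₁, sq_nonneg (v 2)]
  -- combine
  have hAmul : ∀ v : Fin 3 → ℝ, A.mulVec v = X.mulVec (Y.mulVec v) := by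
    intro v; rw [hA, ← mulVec_mulVec]
  have hAup : ∀ v : Fin 3 → ℝ,
      ∑ i, (A.mulVec v i) ^ 2 ≤ (1 + σ₁) * (1 + σ₂) * ∑ i, (v i) ^ 2 := by
    intro v
    rw [hAmul v]
    calc ∑ i, (X.mulVec (Y.mulVec v) i) ^ 2
        ≤ (1 + σ₂) * ∑ i, (Y.mulVec v i) ^ 2 := hXup _
      _ ≤ (1 + σ₂) * ((1 + σ₁) * ∑ i, (v i) ^ 2) :=
          mul_le_mul_of_nonneg_left (hYup v) (by linarith)
      _ = (1 + σ₁) * (1 + σ₂) * ∑ i, (v i) ^ 2 := by ring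
  have hAlo : ∀ v : Fin 3 → ℝ,
      (1 - σ₁) * (1 - σ₂) * ∑ i, (v i) ^ 2 ≤ ∑ i, (A.mulVec v i) ^ 2 := by
    intro v
    rw [hAmul v]
    calc (1 - σ₁) * (1 - σ₂) * ∑ i, (v i) ^ 2
        = (1 - σ₂) * ((1 - σ₁) * ∑ i, (v i) ^ 2) := by ring
      _ ≤ (1 - σ₂) * ∑ i, (Y.mulVec v i) ^ 2 :=
          mul_le_mul_of_nonneg_left (hYlo v) (by linarith)
      _ ≤ ∑ i, (X.mulVec (Y.mulVec v) i) ^ 2 := hXlo _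
  -- determinant
  have hdetX : X.det = t2 := by
    rw [hX]; norm_num [Matrix.det_fin_three, Matrix.vecHead, Matrix.vecTail, Matrix.cons_val_two]
  have hdetY : Y.det = t1 := by
    rcases hY with hY | hY <;>
      (rw [hY]; norm_num [Matrix.det_fin_three, Matrix.vecHead, Matrix.vecTail, Matrix.cons_val_two])
  have hdetA : IsUnit A.det := by
    rw [hA, Matrix.det_mul, hdetX, hdetY, isUnit_iff_ne_zero]
    exact (mul_pos ht2 ht1).ne'
  -- the pieces of the product identities
  have ht1sq : (1 - σ₁) * (1 + σ₁) = t1 ^ 2 := by linear_combination -hσ₁sq - h1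
  have ht2sq : (1 - σ₂) * (1 + σ₂) = t2 ^ 2 := by linear_combination -hσ₂sq - h2
  have hP0 : 0 < (1 - σ₁) * (1 - σ₂) := mul_pos (by linarith) (by linarith)
  have hQ0 : 0 < (1 + σ₁) * (1 + σ₂) := mul_pos (by linarith) (by linarith)
  have hPQ : ((1 - σ₁) * (1 - σ₂)) * ((1 + σ₁) * (1 + σ₂)) = (t1 * t2) ^ 2 := by
    linear_combination ((1 - σ₂) * (1 + σ₂)) * ht1sq + t1 ^ 2 * ht2sq
  refine ⟨opNorm_le_of_sq' A _ hQ0.le hAup, opNorm_inv_le_of_sq' A hdetA _ hP0 hAlo, ?_⟩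
  have hsq : Real.sqrt ((1 - σ₁) * (1 - σ₂)) * Real.sqrt ((1 + σ₁) * (1 + σ₂))
      = t1 * t2 := by
    rw [← Real.sqrt_mul hP0.le, hPQ, Real.sqrt_sq (mul_pos ht1 ht2).le]
  have hs0 : (0:ℝ) < Real.sqrt ((1 - σ₁) * (1 - σ₂)) := Real.sqrt_pos.mpr hP0
  rw [div_eq_div_iff hs0.ne' (mul_pos ht1 ht2).ne', one_mul, ← hsq]
  ring
end

section
/- Let T be a triangle with internal angles θ_1 ≤ θ_2 ≤ θ_3 and suppose θ_3 ≤ γ for some γ with π/3 ≤ γ < π. Then sin θ_2 ≥ min{ sin((π−γ)/2), sin γ } and sin θ_3 ≥ min{ sin((π−γ)/2), sin γ }. -/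
/-- If the internal angles `θ₁ ≤ θ₂ ≤ θ₃` of a triangle satisfy `θ₃ ≤ γ` with
`π/3 ≤ γ < π`, then `sin θ₂` and `sin θ₃` are bounded below by
`min (sin ((π - γ)/2)) (sin γ)`. -/
theorem stmt_8 (θ₁ θ₂ θ₃ γ : ℝ)
    (h1 : 0 < θ₁) (h2 : 0 < θ₂) (h3 : 0 < θ₃)
    (hsum : θ₁ + θ₂ + θ₃ = Real.pi)
    (h12 : θ₁ ≤ θ₂) (h23 : θ₂ ≤ θ₃)
    (hγ1 : Real.pi / 3 ≤ γ) (hγ2 : γ < Real.pi)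
    (hmax : θ₃ ≤ γ) :
    min (Real.sin ((Real.pi - γ) / 2)) (Real.sin γ) ≤ Real.sin θ₂ ∧
      min (Real.sin ((Real.pi - γ) / 2)) (Real.sin γ) ≤ Real.sin θ₃ := by
  have hpi := Real.pi_pos
  -- θ₂ < π/2
  have hθ2lt : θ₂ ≤ Real.pi / 2 := by linarith
  -- θ₂ ≥ (π - γ)/2 since 2θ₂ ≥ θ₁ + θ₂ = π - θ₃ ≥ π - γ
  have hθ2ge : (Real.pi - γ) / 2 ≤ θ₂ := by linarith
  have hA : Real.sin ((Real.pi - γ) / 2) ≤ Real.sin θ₂ :=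
    Real.sin_le_sin_of_le_of_le_pi_div_two (by linarith) hθ2lt hθ2ge
  refine ⟨le_trans (min_le_left _ _) hA, ?_⟩
  rcases le_or_gt θ₃ (Real.pi / 2) with hc | hc
  · refine le_trans (min_le_left _ _) ?_
    exact Real.sin_le_sin_of_le_of_le_pi_div_two (by linarith) hc (by linarith)
  · refine le_trans (min_le_right _ _) ?_
    rw [← Real.sin_pi_sub γ, ← Real.sin_pi_sub θ₃]
    exact Real.sin_le_sin_of_le_of_le_pi_div_two (by linarith) (by linarith) (by linarith)
end

section
/- Let T be a tetrahedron all of whose face internal angles and dihedral angles are ≤ γ, where π/3 ≤ γ < π. Fix j and {m,n,k} = {1,2,3,4}\{j\}, and assume the internal angle θ_n^j of face F_j at x_n is not the minimum angle of F_j and satisfies θ_n^j < π/2. Define δ ∈ (0, π/2] by sin δ = sqrt((cos γ + 1)/(sin(γ/2) + 1)). Then ψ^{m,j} ≥ δ or ψ^{k,j} ≥ δ. -/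
open EuclideanGeometry

noncomputable section

/-- Component of `v` orthogonal to `u`. -/
noncomputable def perpPart (u v : EuclideanSpace ℝ (Fin 3)) : EuclideanSpace ℝ (Fin 3) :=
  v - ((inner ℝ v u : ℝ) / (inner ℝ u u : ℝ)) • u

/-- The dihedral angle along the edge `a b`, between the half-planes through the
edge containing `c` and `d` respectively. -/
noncomputable def dihedralAngle (a b c d : EuclideanSpace ℝ (Fin 3)) : ℝ :=
  InnerProductGeometry.angle (perpPart (b - a) (c - a)) (perpPart (b - a) (d - a))

/-- The angle between the segment from `x j` to `x n` and the plane of the face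
of the tetrahedron `x` opposite to `x j`. -/
noncomputable def edgeFaceAngle (x : Fin 4 → EuclideanSpace ℝ (Fin 3)) (j n : Fin 4) : ℝ :=
  Real.arcsin (Metric.infDist (x j)
    (affineSpan ℝ (x '' {i | i ≠ j}) : Set (EuclideanSpace ℝ (Fin 3))) / dist (x j) (x n))

/-- The maximum angle condition with bound `γ` for the tetrahedron with
vertices `x 0, x 1, x 2, x 3`: all internal angles of the four triangular
faces and all six dihedral angles are at most `γ`. -/
def MaxAngleCond (x : Fin 4 → EuclideanSpace ℝ (Fin 3)) (γ : ℝ) : Prop :=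
  (∀ a b c : Fin 4, a ≠ b → a ≠ c → b ≠ c → ∠ (x a) (x b) (x c) ≤ γ) ∧
  (∀ a b c d : Fin 4, a ≠ b → a ≠ c → a ≠ d → b ≠ c → b ≠ d → c ≠ d →
    dihedralAngle (x a) (x b) (x c) (x d) ≤ γ)

end

/- ### Auxiliary lemmas -/

section Aux

set_option maxHeartbeats 1000000

open RealInnerProductSpace InnerProductGeometry

local notation "E" => EuclideanSpace ℝ (Fin 3)

lemma perpPart_smul_left' {c : ℝ} (hc : c ≠ 0) (u a : E) :
    perpPart (c • u) a = perpPart u a := by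
  unfold perpPart
  rw [real_inner_smul_right, real_inner_smul_left, real_inner_smul_right, smul_smul]
  congr 1
  set s := (inner ℝ a u : ℝ)
  set t := (inner ℝ u u : ℝ)
  by_cases ht : t = 0
  · simp [ht]
  · congr 1
    field_simp

lemma perpPart_neg_left' (u a : E) : perpPart (-u) a = perpPart u a := by
  rw [← neg_one_smul ℝ u, perpPart_smul_left' (by norm_num)]

lemma perpPart_smul_right' (c : ℝ) (u a : E) :
    perpPart u (c • a) = c • perpPart u a := by
  unfold perpPart
  rw [real_inner_smul_left, smul_sub, smul_smul]
  congr 2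
  ring

lemma perpPart_sub_right' (u a b : E) :
    perpPart u (a - b) = perpPart u a - perpPart u b := by
  unfold perpPart
  rw [inner_sub_left, sub_div, sub_smul]
  abel

lemma perpPart_self' (u : E) : perpPart u u = 0 := by
  unfold perpPart
  by_cases hu : (inner ℝ u u : ℝ) = 0
  · have : u = 0 := by rwa [inner_self_eq_zero] at hu
    simp [this]
  · rw [div_self hu, one_smul, sub_self]

lemma inner_perpPart (u a b : E) (hu : (inner ℝ u u : ℝ) = 1) :
    (inner ℝ (perpPart u a) (perpPart u b) : ℝ)
      = inner ℝ a b - (inner ℝ a u : ℝ) * (inner ℝ b u : ℝ) := by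
  unfold perpPart
  rw [hu]
  simp only [div_one, inner_sub_left, inner_sub_right, real_inner_smul_left,
    real_inner_smul_right, hu]
  rw [real_inner_comm u b]
  ring

lemma norm_perpPart (u a : E) (hu : (inner ℝ u u : ℝ) = 1)
    (ha1 : (inner ℝ a a : ℝ) = 1) :
    ‖perpPart u a‖ = Real.sqrt (1 - (inner ℝ a u : ℝ) ^ 2) := by
  rw [norm_eq_sqrt_real_inner, inner_perpPart u a a hu, ha1]
  ring_nf

/-- The spherical law of cosines, dual form: for unit vectors `u v w` pairwise
in general position, the cosine of the dihedral angle along `u` is expressed via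
the two dihedral angles along `w` and `v` and the angle between `v` and `w`. -/
lemma spherical_dual (u v w : E)
    (hu : (inner ℝ u u : ℝ) = 1) (hv : (inner ℝ v v : ℝ) = 1) (hw : (inner ℝ w w : ℝ) = 1)
    (hp : |(inner ℝ u v : ℝ)| < 1) (hq : |(inner ℝ u w : ℝ)| < 1) (hr : |(inner ℝ v w : ℝ)| < 1) :
    Real.cos (angle (perpPart u v) (perpPart u w)) =
      Real.sin (angle (perpPart w u) (perpPart w v)) *
        Real.sin (angle (perpPart v u) (perpPart v w)) * Real.cos (angle v w) -
      Real.cos (angle (perpPart w u) (perpPart w v)) *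
        Real.cos (angle (perpPart v u) (perpPart v w)) := by
  set p := (inner ℝ u v : ℝ) with hpdef
  set q := (inner ℝ u w : ℝ) with hqdef
  set r := (inner ℝ v w : ℝ) with hrdef
  have hvu : (inner ℝ v u : ℝ) = p := (real_inner_comm v u).symm
  have hwu : (inner ℝ w u : ℝ) = q := (real_inner_comm w u).symm
  have hwv : (inner ℝ w v : ℝ) = r := (real_inner_comm w v).symm
  have huv' : (inner ℝ u v : ℝ) = p := hpdef.symm
  have huw' : (inner ℝ u w : ℝ) = q := hqdef.symm
  have hvw' : (inner ℝ v w : ℝ) = r := hrdef.symm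
  have hp2 : p ^ 2 < 1 := by
    calc p ^ 2 = |p| ^ 2 := (sq_abs p).symm
      _ < 1 ^ 2 := by exact pow_lt_pow_left₀ hp (abs_nonneg p) two_ne_zero
      _ = 1 := one_pow 2
  have hq2 : q ^ 2 < 1 := by
    calc q ^ 2 = |q| ^ 2 := (sq_abs q).symm
      _ < 1 ^ 2 := by exact pow_lt_pow_left₀ hq (abs_nonneg q) two_ne_zero
      _ = 1 := one_pow 2
  have hr2 : r ^ 2 < 1 := by
    calc r ^ 2 = |r| ^ 2 := (sq_abs r).symm
      _ < 1 ^ 2 := by exact pow_lt_pow_left₀ hr (abs_nonneg r) two_ne_zero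
      _ = 1 := one_pow 2
  set sp := Real.sqrt (1 - p ^ 2) with hspdef
  set sq := Real.sqrt (1 - q ^ 2) with hsqdef
  set sr := Real.sqrt (1 - r ^ 2) with hsrdef
  have hsp : 0 < sp := Real.sqrt_pos.mpr (by linarith)
  have hsq : 0 < sq := Real.sqrt_pos.mpr (by linarith)
  have hsr : 0 < sr := Real.sqrt_pos.mpr (by linarith)
  have hsp2 : sp ^ 2 = 1 - p ^ 2 := Real.sq_sqrt (by linarith)
  have hsq2 : sq ^ 2 = 1 - q ^ 2 := Real.sq_sqrt (by linarith)
  have hsr2 : sr ^ 2 = 1 - r ^ 2 := Real.sq_sqrt (by linarith)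
  have nuv : ‖perpPart u v‖ = sp := by rw [norm_perpPart u v hu hv, hvu]
  have nuw : ‖perpPart u w‖ = sq := by rw [norm_perpPart u w hu hw, hwu]
  have nwu : ‖perpPart w u‖ = sq := by rw [norm_perpPart w u hw hu, huw']
  have nwv : ‖perpPart w v‖ = sr := by rw [norm_perpPart w v hw hv, hvw']
  have nvu : ‖perpPart v u‖ = sp := by rw [norm_perpPart v u hv hu, huv']
  have nvw : ‖perpPart v w‖ = sr := by rw [norm_perpPart v w hv hw, hwv]
  set c3 := Real.cos (angle (perpPart u v) (perpPart u w)) with hc3def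
  set c1 := Real.cos (angle (perpPart w u) (perpPart w v)) with hc1def
  set c2 := Real.cos (angle (perpPart v u) (perpPart v w)) with hc2def
  set s1 := Real.sin (angle (perpPart w u) (perpPart w v)) with hs1def
  set s2 := Real.sin (angle (perpPart v u) (perpPart v w)) with hs2def
  clear_value p q r sp sq sr c1 c2 c3 s1 s2
  have E3 : c3 * (sp * sq) = r - p * q := by
    have h := cos_angle_mul_norm_mul_norm (perpPart u v) (perpPart u w)
    rwa [nuv, nuw, inner_perpPart u v w hu, hvu, hwu, hvw', ← hc3def] at h
  have E1 : c1 * (sq * sr) = p - q * r := by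
    have h := cos_angle_mul_norm_mul_norm (perpPart w u) (perpPart w v)
    rwa [nwu, nwv, inner_perpPart w u v hw, huv', huw', hvw', ← hc1def] at h
  have E2 : c2 * (sp * sr) = q - p * r := by
    have h := cos_angle_mul_norm_mul_norm (perpPart v u) (perpPart v w)
    rwa [nvu, nvw, inner_perpPart v u w hv, huw', huv', hwv, ← hc2def] at h
  have costh : Real.cos (angle v w) = r := by
    have h := cos_angle_mul_norm_mul_norm v w
    have nv1 : ‖v‖ = 1 := by rw [norm_eq_sqrt_real_inner, hv, Real.sqrt_one]
    have nw1 : ‖w‖ = 1 := by rw [norm_eq_sqrt_real_inner, hw, Real.sqrt_one]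
    rwa [nv1, nw1, mul_one, mul_one, hvw'] at h
  have S1nn : 0 ≤ s1 := by
    rw [hs1def]
    exact Real.sin_nonneg_of_nonneg_of_le_pi (angle_nonneg _ _) (angle_le_pi _ _)
  have S2nn : 0 ≤ s2 := by
    rw [hs2def]
    exact Real.sin_nonneg_of_nonneg_of_le_pi (angle_nonneg _ _) (angle_le_pi _ _)
  have S1sq : s1 ^ 2 = 1 - c1 ^ 2 := by
    rw [hs1def, hc1def]
    have h := Real.sin_sq_add_cos_sq (angle (perpPart w u) (perpPart w v)); linarith
  have S2sq : s2 ^ 2 = 1 - c2 ^ 2 := by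
    rw [hs2def, hc2def]
    have h := Real.sin_sq_add_cos_sq (angle (perpPart v u) (perpPart v w)); linarith
  have hE1sq : (c1 * (sq * sr)) ^ 2 = (p - q * r) ^ 2 := by rw [E1]
  have hE2sq : (c2 * (sp * sr)) ^ 2 = (q - p * r) ^ 2 := by rw [E2]
  have HA2 : (s1 * (sq * sr)) ^ 2 = (1 - q ^ 2) * (1 - r ^ 2) - (p - q * r) ^ 2 := by
    linear_combination (sq ^ 2 * sr ^ 2) * S1sq + sq ^ 2 * hsr2 + (1 - r ^ 2) * hsq2 - hE1sq
  have HB2 : (s2 * (sp * sr)) ^ 2 = (1 - p ^ 2) * (1 - r ^ 2) - (q - p * r) ^ 2 := by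
    linear_combination (sp ^ 2 * sr ^ 2) * S2sq + sp ^ 2 * hsr2 + (1 - r ^ 2) * hsp2 - hE2sq
  have HAB : s1 * (sq * sr) = s2 * (sp * sr) := by
    have h1 : 0 ≤ s1 * (sq * sr) := by positivity
    have h2 : 0 ≤ s2 * (sp * sr) := by positivity
    have hsq' : (s1 * (sq * sr)) ^ 2 = (s2 * (sp * sr)) ^ 2 := by rw [HA2, HB2]; ring
    calc s1 * (sq * sr) = Real.sqrt ((s1 * (sq * sr)) ^ 2) := (Real.sqrt_sq h1).symm
      _ = Real.sqrt ((s2 * (sp * sr)) ^ 2) := by rw [hsq']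
      _ = s2 * (sp * sr) := Real.sqrt_sq h2
  rw [costh]
  have hne : sp * (sq * sr ^ 2) ≠ 0 := by positivity
  apply mul_right_cancel₀ hne
  linear_combination (sr ^ 2) * E3 + (r - p * q) * hsr2 + (r * (s1 * (sq * sr))) * HAB
    - r * HA2 + (c2 * (sp * sr)) * E1 + (p - q * r) * E2

/-- Moving the dihedral angle to be measured from the second point of the edge. -/
lemma dihedral_rebase (a b c d : E) :
    dihedralAngle a b c d =
      InnerProductGeometry.angle (perpPart (a - b) (c - b)) (perpPart (a - b) (d - b)) := by
  unfold dihedralAngle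
  have h1 : a - b = -(b - a) := (neg_sub _ _).symm
  have h2 : c - b = (c - a) - (b - a) := (sub_sub_sub_cancel_right _ _ _).symm
  have h3 : d - b = (d - a) - (b - a) := (sub_sub_sub_cancel_right _ _ _).symm
  rw [h1, h2, h3, perpPart_neg_left', perpPart_neg_left',
    perpPart_sub_right' (b - a) (c - a) (b - a), perpPart_sub_right' (b - a) (d - a) (b - a),
    perpPart_self' (b - a), sub_zero, sub_zero]

/-- Dihedral angles in terms of normalized vectors. -/
lemma dihedral_normalize (a b c : E) (ha : a ≠ 0) (hb : b ≠ 0) (hc : c ≠ 0) :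
    InnerProductGeometry.angle (perpPart a b) (perpPart a c) =
      InnerProductGeometry.angle (perpPart (‖a‖⁻¹ • a) (‖b‖⁻¹ • b))
        (perpPart (‖a‖⁻¹ • a) (‖c‖⁻¹ • c)) := by
  have hna : (‖a‖⁻¹ : ℝ) ≠ 0 := inv_ne_zero (norm_ne_zero_iff.mpr ha)
  rw [perpPart_smul_left' hna, perpPart_smul_left' hna, perpPart_smul_right', perpPart_smul_right',
    angle_smul_left_of_pos _ _ (inv_pos.mpr (norm_pos_iff.mpr hb)),
    angle_smul_right_of_pos _ _ (inv_pos.mpr (norm_pos_iff.mpr hc))]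

lemma abs_inner_normalized_lt (a b : E) (ha : a ≠ 0) (hb : b ≠ 0)
    (h0 : 0 < InnerProductGeometry.angle a b) (hpi : InnerProductGeometry.angle a b < Real.pi) :
    |(inner ℝ (‖a‖⁻¹ • a) (‖b‖⁻¹ • b) : ℝ)| < 1 := by
  have hna : ‖(‖a‖⁻¹ • a : E)‖ = 1 := norm_smul_inv_norm ha
  have hnb : ‖(‖b‖⁻¹ • b : E)‖ = 1 := norm_smul_inv_norm hb
  have hang : InnerProductGeometry.angle (‖a‖⁻¹ • a : E) (‖b‖⁻¹ • b) =
      InnerProductGeometry.angle a b := by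
    rw [angle_smul_left_of_pos _ _ (inv_pos.mpr (norm_pos_iff.mpr ha)),
      angle_smul_right_of_pos _ _ (inv_pos.mpr (norm_pos_iff.mpr hb))]
  have hc := InnerProductGeometry.cos_angle (‖a‖⁻¹ • a : E) (‖b‖⁻¹ • b)
  rw [hna, hnb, mul_one, div_one, hang] at hc
  rw [← hc]
  have hlt1 : Real.cos (InnerProductGeometry.angle a b) < 1 := by
    have := Real.cos_lt_cos_of_nonneg_of_le_pi le_rfl (angle_le_pi a b) h0
    rwa [Real.cos_zero] at this
  have hgt : -1 < Real.cos (InnerProductGeometry.angle a b) := by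
    have := Real.cos_lt_cos_of_nonneg_of_le_pi (angle_nonneg a b) le_rfl hpi
    rwa [Real.cos_pi] at this
  exact abs_lt.mpr ⟨hgt, hlt1⟩

lemma notCol (x : Fin 4 → E) (hx : AffineIndependent ℝ x) {a b c : Fin 4}
    (hab : a ≠ b) (hac : a ≠ c) (hbc : b ≠ c) :
    ¬ Collinear ℝ ({x a, x b, x c} : Set E) := by
  have he : Function.Injective ![a, b, c] := by
    intro i j hij
    fin_cases i <;> fin_cases j <;> simp_all
  have h3 := hx.comp_embedding ⟨![a, b, c], he⟩
  have hxe : x ∘ (⟨![a, b, c], he⟩ : Fin 3 ↪ Fin 4) = ![x a, x b, x c] := by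
    funext i; fin_cases i <;> rfl
  rw [hxe] at h3
  exact affineIndependent_iff_not_collinear_set.mp h3

end Aux

set_option maxHeartbeats 1600000 in
/-- If the tetrahedron `x` satisfies the maximum angle condition with `γ`,
`π/3 ≤ γ < π`, and the internal angle `θ_n^j` of face `F_j` at `x n` is not
the minimum angle of `F_j` and is `< π/2`, then with `δ ∈ (0, π/2]` defined by
`sin δ = sqrt ((cos γ + 1)/(sin (γ/2) + 1))`, either `ψ^{m,j} ≥ δ` or
`ψ^{k,j} ≥ δ`. -/
theorem stmt_11 (x : Fin 4 → EuclideanSpace ℝ (Fin 3))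
    (hx : AffineIndependent ℝ x)
    (γ : ℝ) (hγ1 : Real.pi / 3 ≤ γ) (hγ2 : γ < Real.pi)
    (hmac : MaxAngleCond x γ)
    (j k m n : Fin 4)
    (hjk : j ≠ k) (hjm : j ≠ m) (hjn : j ≠ n)
    (hkm : k ≠ m) (hkn : k ≠ n) (hmn : m ≠ n)
    -- `θ_n^j = ∠ (x m) (x n) (x k)` is not the minimum angle of the face
    -- `F_j` (with vertices `x m, x n, x k`):
    (hnotmin : ∠ (x n) (x m) (x k) ≤ ∠ (x m) (x n) (x k) ∨
               ∠ (x m) (x k) (x n) ≤ ∠ (x m) (x n) (x k))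
    (hacute : ∠ (x m) (x n) (x k) < Real.pi / 2)
    (δ : ℝ)
    (hδ : δ = Real.arcsin (Real.sqrt ((Real.cos γ + 1) / (Real.sin (γ / 2) + 1)))) :
    δ ≤ dihedralAngle (x k) (x n) (x j) (x m) ∨
      δ ≤ dihedralAngle (x m) (x n) (x j) (x k) := by
  by_contra hcon
  push_neg at hcon
  obtain ⟨hψ1lt, hψ2lt⟩ := hcon
  have hπ := Real.pi_pos
  -- the three edge vectors at `x n`
  set u : EuclideanSpace ℝ (Fin 3) := x j - x n with hudef
  set v : EuclideanSpace ℝ (Fin 3) := x m - x n with hvdef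
  set w : EuclideanSpace ℝ (Fin 3) := x k - x n with hwdef
  have hu0 : u ≠ 0 := sub_ne_zero.mpr (hx.injective.ne hjn)
  have hv0 : v ≠ 0 := sub_ne_zero.mpr (hx.injective.ne hmn)
  have hw0 : w ≠ 0 := sub_ne_zero.mpr (hx.injective.ne hkn)
  set u' : EuclideanSpace ℝ (Fin 3) := ‖u‖⁻¹ • u with hu'def
  set v' : EuclideanSpace ℝ (Fin 3) := ‖v‖⁻¹ • v with hv'def
  set w' : EuclideanSpace ℝ (Fin 3) := ‖w‖⁻¹ • w with hw'def
  have hnorm : ∀ z : EuclideanSpace ℝ (Fin 3), z ≠ 0 → ‖(‖z‖⁻¹ • z : EuclideanSpace ℝ (Fin 3))‖ = 1 := by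
    intro z hz
    rw [norm_smul, norm_inv, norm_norm, inv_mul_cancel₀ (norm_ne_zero_iff.mpr hz)]
  have hu1 : (inner ℝ u' u' : ℝ) = 1 := by
    rw [real_inner_self_eq_norm_sq, hu'def, hnorm u hu0]; norm_num
  have hv1 : (inner ℝ v' v' : ℝ) = 1 := by
    rw [real_inner_self_eq_norm_sq, hv'def, hnorm v hv0]; norm_num
  have hw1 : (inner ℝ w' w' : ℝ) = 1 := by
    rw [real_inner_self_eq_norm_sq, hw'def, hnorm w hw0]; norm_num
  -- expressing the three dihedral angles at the vertex `x n` via normalized vectors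
  have hψ1eq : dihedralAngle (x k) (x n) (x j) (x m)
      = InnerProductGeometry.angle (perpPart w' u') (perpPart w' v') := by
    rw [dihedral_rebase]
    exact dihedral_normalize w u v hw0 hu0 hv0
  have hψ2eq : dihedralAngle (x m) (x n) (x j) (x k)
      = InnerProductGeometry.angle (perpPart v' u') (perpPart v' w') := by
    rw [dihedral_rebase]
    exact dihedral_normalize v u w hv0 hu0 hw0
  have hΨeq : dihedralAngle (x n) (x j) (x m) (x k)
      = InnerProductGeometry.angle (perpPart u' v') (perpPart u' w') := by
    show InnerProductGeometry.angle (perpPart (x j - x n) (x m - x n))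
        (perpPart (x j - x n) (x k - x n)) = _
    exact dihedral_normalize u v w hu0 hv0 hw0
  -- the angles of pairs of edge vectors are angles of the tetrahedron
  have hangjm : InnerProductGeometry.angle u v = ∠ (x j) (x n) (x m) := rfl
  have hangjk : InnerProductGeometry.angle u w = ∠ (x j) (x n) (x k) := rfl
  have hangmk : InnerProductGeometry.angle v w = ∠ (x m) (x n) (x k) := rfl
  -- non-collinearity facts
  have hCuv := notCol x hx hjn hjm hmn.symm  -- {x j, x n, x m}
  have hCuw := notCol x hx hjn hjk hkn.symm  -- {x j, x n, x k}
  have hCvw := notCol x hx hmn hkm.symm hkn.symm  -- {x m, x n, x k}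
  have hpuv : |(inner ℝ u' v' : ℝ)| < 1 := by
    rw [hu'def, hv'def]
    exact abs_inner_normalized_lt u v hu0 hv0
      (hangjm ▸ EuclideanGeometry.angle_pos_of_not_collinear hCuv)
      (hangjm ▸ EuclideanGeometry.angle_lt_pi_of_not_collinear hCuv)
  have hpuw : |(inner ℝ u' w' : ℝ)| < 1 := by
    rw [hu'def, hw'def]
    exact abs_inner_normalized_lt u w hu0 hw0
      (hangjk ▸ EuclideanGeometry.angle_pos_of_not_collinear hCuw)
      (hangjk ▸ EuclideanGeometry.angle_lt_pi_of_not_collinear hCuw)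
  have hpvw : |(inner ℝ v' w' : ℝ)| < 1 := by
    rw [hv'def, hw'def]
    exact abs_inner_normalized_lt v w hv0 hw0
      (hangmk ▸ EuclideanGeometry.angle_pos_of_not_collinear hCvw)
      (hangmk ▸ EuclideanGeometry.angle_lt_pi_of_not_collinear hCvw)
  -- the spherical law of cosines (dual form)
  have key := spherical_dual u' v' w' hu1 hv1 hw1 hpuv hpuw hpvw
  have hangv'w' : InnerProductGeometry.angle v' w' = ∠ (x m) (x n) (x k) := by
    rw [hv'def, hw'def,
      InnerProductGeometry.angle_smul_left_of_pos _ _ (inv_pos.mpr (norm_pos_iff.mpr hv0)),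
      InnerProductGeometry.angle_smul_right_of_pos _ _ (inv_pos.mpr (norm_pos_iff.mpr hw0)),
      hangmk]
  rw [← hψ1eq, ← hψ2eq, ← hΨeq, hangv'w'] at key
  -- abbreviations
  set θ : ℝ := ∠ (x m) (x n) (x k) with hθdef
  set ψ1 : ℝ := dihedralAngle (x k) (x n) (x j) (x m) with hψ1def
  set ψ2 : ℝ := dihedralAngle (x m) (x n) (x j) (x k) with hψ2def
  set Ψ : ℝ := dihedralAngle (x n) (x j) (x m) (x k) with hΨdef
  -- ranges of the angles
  have hψ1nn : 0 ≤ ψ1 := hψ1eq ▸ InnerProductGeometry.angle_nonneg _ _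
  have hψ1pi : ψ1 ≤ Real.pi := hψ1eq ▸ InnerProductGeometry.angle_le_pi _ _
  have hψ2nn : 0 ≤ ψ2 := hψ2eq ▸ InnerProductGeometry.angle_nonneg _ _
  have hψ2pi : ψ2 ≤ Real.pi := hψ2eq ▸ InnerProductGeometry.angle_le_pi _ _
  have hΨnn : 0 ≤ Ψ := hΨeq ▸ InnerProductGeometry.angle_nonneg _ _
  have hθnn : 0 ≤ θ := EuclideanGeometry.angle_nonneg _ _ _
  have hθpi : θ ≤ Real.pi := EuclideanGeometry.angle_le_pi _ _ _
  -- the dihedral angle along the edge `x n x j` is at most γ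
  have hΨγ : Ψ ≤ γ := hmac.2 n j m k hjn.symm hmn.symm hkn.symm hjm hjk hkm.symm
  have hcosΨ : Real.cos γ ≤ Real.cos Ψ :=
    Real.cos_le_cos_of_nonneg_of_le_pi hΨnn (le_of_lt hγ2) hΨγ
  -- θ is at least (π - γ)/2
  have hsum := EuclideanGeometry.angle_add_angle_add_angle_eq_pi
    (p₁ := x n) (p₂ := x m) (x k) (hx.injective.ne hmn)
  have hcomm : ∠ (x k) (x n) (x m) = θ := EuclideanGeometry.angle_comm _ _ _
  have hγm : ∠ (x n) (x m) (x k) ≤ γ := hmac.1 n m k hmn.symm hkn.symm hkm.symm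
  have hγk : ∠ (x m) (x k) (x n) ≤ γ := hmac.1 m k n hkm.symm hmn hkn
  have hθlb : (Real.pi - γ) / 2 ≤ θ := by
    rcases hnotmin with h | h
    · linarith
    · linarith
  have hcosθ_le : Real.cos θ ≤ Real.sin (γ / 2) := by
    have h := Real.cos_le_cos_of_nonneg_of_le_pi (by linarith) hθpi hθlb
    rwa [show (Real.pi - γ) / 2 = Real.pi / 2 - γ / 2 by ring, Real.cos_pi_div_two_sub] at h
  have hcosθ_nn : 0 ≤ Real.cos θ :=
    Real.cos_nonneg_of_mem_Icc ⟨by linarith, le_of_lt hacute⟩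
  -- facts about δ
  have hsinhalf : 0 < Real.sin (γ / 2) :=
    Real.sin_pos_of_pos_of_lt_pi (by linarith) (by linarith)
  have hcosγ : -1 < Real.cos γ := by
    have := Real.cos_lt_cos_of_nonneg_of_le_pi (by linarith : (0:ℝ) ≤ γ) le_rfl hγ2
    rwa [Real.cos_pi] at this
  have hcosle : Real.cos γ ≤ Real.sin (γ / 2) := by
    have h := Real.cos_le_cos_of_nonneg_of_le_pi
      (by linarith : (0:ℝ) ≤ Real.pi / 2 - γ / 2) (le_of_lt hγ2) (by linarith)
    rwa [Real.cos_pi_div_two_sub] at h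
  set t : ℝ := (Real.cos γ + 1) / (Real.sin (γ / 2) + 1) with htdef
  have ht0 : 0 < t := div_pos (by linarith) (by linarith)
  have ht1 : t ≤ 1 := by rw [htdef, div_le_one (by linarith)]; linarith
  have hst1 : Real.sqrt t ≤ 1 := by
    rw [show (1:ℝ) = Real.sqrt 1 by rw [Real.sqrt_one]]
    exact Real.sqrt_le_sqrt ht1
  have hsinδ : Real.sin δ = Real.sqrt t := by
    rw [hδ]; exact Real.sin_arcsin (by linarith [Real.sqrt_nonneg t]) hst1
  have hsinδnn : 0 ≤ Real.sin δ := by rw [hsinδ]; exact Real.sqrt_nonneg t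
  have hsδ2 : Real.sin δ * Real.sin δ = t := by
    rw [hsinδ]; exact Real.mul_self_sqrt (le_of_lt ht0)
  have hδle : δ ≤ Real.pi / 2 := by rw [hδ]; exact Real.arcsin_le_pi_div_two _
  have hδnn : 0 ≤ δ := by rw [hδ]; exact Real.arcsin_nonneg.mpr (Real.sqrt_nonneg _)
  have hcosδnn : 0 ≤ Real.cos δ := Real.cos_nonneg_of_mem_Icc ⟨by linarith, hδle⟩
  have hcδ2 : Real.cos δ * Real.cos δ = 1 - t := by
    have h := Real.sin_sq_add_cos_sq δ
    linear_combination h - hsδ2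
  -- comparisons of the trigonometric values
  have hc1 : Real.cos δ < Real.cos ψ1 :=
    Real.cos_lt_cos_of_nonneg_of_le_pi hψ1nn (by linarith) hψ1lt
  have hc2 : Real.cos δ < Real.cos ψ2 :=
    Real.cos_lt_cos_of_nonneg_of_le_pi hψ2nn (by linarith) hψ2lt
  have hs1 : Real.sin ψ1 < Real.sin δ :=
    Real.sin_lt_sin_of_lt_of_le_pi_div_two (by linarith) hδle hψ1lt
  have hs2 : Real.sin ψ2 < Real.sin δ :=
    Real.sin_lt_sin_of_lt_of_le_pi_div_two (by linarith) hδle hψ2lt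
  have hs1nn : 0 ≤ Real.sin ψ1 := Real.sin_nonneg_of_nonneg_of_le_pi hψ1nn hψ1pi
  have hs2nn : 0 ≤ Real.sin ψ2 := Real.sin_nonneg_of_nonneg_of_le_pi hψ2nn hψ2pi
  -- put everything together
  have m1 : Real.sin ψ1 * Real.sin ψ2 ≤ Real.sin δ * Real.sin δ :=
    mul_le_mul (le_of_lt hs1) (le_of_lt hs2) hs2nn hsinδnn
  have m2 : Real.sin ψ1 * Real.sin ψ2 * Real.cos θ ≤ Real.sin δ * Real.sin δ * Real.cos θ :=
    mul_le_mul_of_nonneg_right m1 hcosθ_nn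
  have m3 : Real.sin δ * Real.sin δ * Real.cos θ ≤ Real.sin δ * Real.sin δ * Real.sin (γ / 2) :=
    mul_le_mul_of_nonneg_left hcosθ_le (by positivity)
  have m3' : Real.sin δ * Real.sin δ * Real.sin (γ / 2) = t * Real.sin (γ / 2) := by
    rw [hsδ2]
  have m4 : Real.cos δ * Real.cos δ < Real.cos ψ1 * Real.cos ψ2 :=
    mul_lt_mul'' hc1 hc2 hcosδnn hcosδnn
  have e_t : t * Real.sin (γ / 2) = Real.cos γ + 1 - t := by
    have h : t * (Real.sin (γ / 2) + 1) = Real.cos γ + 1 :=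
      div_mul_cancel₀ _ (by linarith)
    linarith [h, mul_one t]
  linarith [key, hcosΨ, m2, m3, m3', m4, e_t]
end
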